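/- Let X, M, X̂ be random variables with X → M → X̂ a Markov chain such that, conditioned on M, X̂ is independent of X and has the same conditional distribution as X given M. Then E[‖X − X̂‖²] = 2·E[‖X − E[X|M]‖²]; that is, any such distribution-preserving estimator incurs mean squared error exactly twice the minimum mean squared error of estimating X from M. -/

import Mathlib

/-!
Given `M = b`, the variables `X` and `X̂` are independent draws from the same law `κ b`
(the conditional distribution of `X` given `M`). For two independent draws `x, y` from a law with
mean `m`, expanding `x - y = (x - m) - (y - m)` kills the cross term, so
`E‖x - y‖² = 2 E‖x - m‖²`. Since `E[X|M]` is the mean of `κ M`, integrating this identity against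
the law of `M` gives the theorem.
-/

open MeasureTheory ProbabilityTheory Real
open scoped RealInnerProductSpace ENNReal

section VarianceIdentity

variable {E : Type*} [NormedAddCommGroup E] [InnerProductSpace ℝ E] [CompleteSpace E]
  [MeasurableSpace E] {μ : Measure E} [IsProbabilityMeasure μ]

lemma integral_norm_sub_sq_eq_norm_sub_integral_sq_add (hμ : MemLp id 2 μ) (x : E) :
    ∫ y, ‖x - y‖ ^ 2 ∂μ = ‖x - ∫ y, y ∂μ‖ ^ 2 + ∫ y, ‖y - ∫ z, z ∂μ‖ ^ 2 ∂μ := by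
  set m := ∫ y, y ∂μ
  have hid : Integrable (fun y : E => y) μ := hμ.integrable one_le_two
  have hcent : MemLp (fun y => y - m) 2 μ := hμ.sub (memLp_const m)
  have hmean : ∫ y, (y - m) ∂μ = 0 := by
    rw [integral_sub hid (integrable_const m)]
    simp [m]
  have hcross : Integrable (fun y => 2 * ⟪x - m, y - m⟫) μ :=
    ((hcent.integrable one_le_two).const_inner (x - m)).const_mul 2
  calc ∫ y, ‖x - y‖ ^ 2 ∂μ
      = ∫ y, (‖x - m‖ ^ 2 - 2 * ⟪x - m, y - m⟫ + ‖y - m‖ ^ 2) ∂μ := by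
        congr with y
        rw [← norm_sub_sq_real, sub_sub_sub_cancel_right]
    _ = ‖x - m‖ ^ 2 - 2 * ⟪x - m, ∫ y, (y - m) ∂μ⟫ + ∫ y, ‖y - m‖ ^ 2 ∂μ := by
        rw [integral_add ((integrable_const _).sub' hcross) (hcent.integrable_norm_pow two_ne_zero),
          integral_sub (integrable_const _) hcross, integral_const, integral_const_mul,
          integral_inner (hcent.integrable one_le_two), probReal_univ, one_smul]
    _ = ‖x - m‖ ^ 2 + ∫ y, ‖y - m‖ ^ 2 ∂μ := by simp [hmean]

lemma integral_prod_self_norm_sub_sq (hμ : MemLp id 2 μ) :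
    ∫ p : E × E, ‖p.1 - p.2‖ ^ 2 ∂(μ.prod μ) = 2 * ∫ x, ‖x - ∫ y, y ∂μ‖ ^ 2 ∂μ := by
  have hint : Integrable (fun p : E × E => ‖p.1 - p.2‖ ^ 2) (μ.prod μ) :=
    ((hμ.comp_fst μ).sub (hμ.comp_snd μ)).integrable_norm_pow two_ne_zero
  have hvar : Integrable (fun x => ‖x - ∫ y, y ∂μ‖ ^ 2) μ :=
    (hμ.sub (memLp_const _)).integrable_norm_pow two_ne_zero
  rw [integral_prod _ hint]
  simp only [integral_norm_sub_sq_eq_norm_sub_integral_sq_add hμ]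
  rw [integral_add hvar (integrable_const _), integral_const, probReal_univ, one_smul, two_mul]

end VarianceIdentity

section ConditionalLaw

variable {Ω β γ : Type*} [MeasurableSpace Ω] [MeasurableSpace β] [MeasurableSpace γ]
  {P : Measure Ω} [IsFiniteMeasure P] {M : Ω → γ}

lemma integral_eq_integral_integral_of_map_eq_compProd {δ F : Type*} [MeasurableSpace δ]
    [NormedAddCommGroup F] [NormedSpace ℝ F] {Z : Ω → δ} {η : Kernel γ δ} [IsSFiniteKernel η]
    (hM : Measurable M) (hZ : Measurable Z)
    (hlaw : P.map (fun ω => (M ω, Z ω)) = P.map M ⊗ₘ η)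
    {f : γ × δ → F} (hf : StronglyMeasurable f) (hint : Integrable (fun ω => f (M ω, Z ω)) P) :
    ∫ ω, f (M ω, Z ω) ∂P = ∫ b, ∫ z, f (b, z) ∂η b ∂P.map M := by
  have hMZ : AEMeasurable (fun ω => (M ω, Z ω)) P := (hM.prodMk hZ).aemeasurable
  rw [← integral_map hMZ hf.aestronglyMeasurable, hlaw]
  refine Measure.integral_compProd ?_
  rwa [← hlaw, integrable_map_measure hf.aestronglyMeasurable hMZ]

variable [StandardBorelSpace β] [Nonempty β]

lemma ae_memLp_condDistrib [NormedAddCommGroup β] [BorelSpace β] [SecondCountableTopology β]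
    {X : Ω → β} {p : ℝ≥0∞}
    (hp0 : p ≠ 0) (hp : p ≠ ∞) (hM : Measurable M) (hX : Measurable X) (hXp : MemLp X p P) :
    ∀ᵐ b ∂P.map M, MemLp id p (condDistrib X M P b) := by
  have hint : Integrable (fun q : γ × β => ‖q.2‖ ^ p.toReal) (P.map fun ω => (M ω, X ω)) := by
    rw [integrable_map_measure (measurable_snd.norm.pow_const _).aestronglyMeasurable
      (hM.prodMk hX).aemeasurable]
    exact (integrable_norm_rpow_iff hXp.1 hp0 hp).2 hXp
  filter_upwards [hint.condDistrib_ae_map hX.aemeasurable] with b hb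
  exact (integrable_norm_rpow_iff aestronglyMeasurable_id hp0 hp).1 hb

lemma map_prodMk_eq_compProd_prod_condDistrib_self [StandardBorelSpace Ω] [Nonempty Ω]
    {X Y : Ω → β} (hM : Measurable M)
    (hX : Measurable X) (hY : Measurable Y) (hindep : X ⟂ᵢ[M, hM; P] Y)
    (hdist : condDistrib X M P =ᵐ[P.map M] condDistrib Y M P) :
    P.map (fun ω => (M ω, X ω, Y ω)) = P.map M ⊗ₘ (condDistrib X M P ×ₖ condDistrib X M P) := by
  rw [(condIndepFun_iff_map_prod_eq_prod_condDistrib_prod_condDistrib hX hY hM).1 hindep,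
    ← Measure.compProd_eq_comp_prod]
  refine Measure.compProd_congr (hdist.mono fun b hb => ?_)
  rw [Kernel.prod_apply, Kernel.prod_apply, hb]

end ConditionalLaw

theorem mse_eq_two_mmse
    {Ω : Type*} [MeasurableSpace Ω] [StandardBorelSpace Ω] [Nonempty Ω]
    {E : Type*} [NormedAddCommGroup E] [InnerProductSpace ℝ E] [CompleteSpace E]
    [SecondCountableTopology E] [MeasurableSpace E] [BorelSpace E]
    {γ : Type*} [MeasurableSpace γ]
    (P : Measure Ω) [IsProbabilityMeasure P]
    (X Xhat : Ω → E) (M : Ω → γ)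
    (hX : Measurable X) (hXhat : Measurable Xhat) (hM : Measurable M)
    -- `X` is square-integrable
    (hX2 : MeasureTheory.MemLp X 2 P)
    (hXhat2 : MeasureTheory.MemLp Xhat 2 P)
    -- `X` and `X̂` are conditionally independent given `M`
    (hindep : CondIndepFun (MeasurableSpace.comap M inferInstance) hM.comap_le X Xhat P)
    -- `X̂` has the same conditional distribution given `M` as `X`
    (hdist : ∀ᵐ b ∂(P.map M), condDistrib X M P b = condDistrib Xhat M P b) :
    ∫ ω, ‖X ω - Xhat ω‖ ^ 2 ∂P =
      2 * ∫ ω, ‖X ω - (P[X | MeasurableSpace.comap M inferInstance]) ω‖ ^ 2 ∂P := by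
  set κ := condDistrib X M P
  have hmse : ∫ ω, ‖X ω - Xhat ω‖ ^ 2 ∂P
      = ∫ b, ∫ q, ‖q.1 - q.2‖ ^ 2 ∂(κ ×ₖ κ) b ∂P.map M :=
    integral_eq_integral_integral_of_map_eq_compProd (f := fun q => ‖q.2.1 - q.2.2‖ ^ 2) hM
      (hX.prodMk hXhat) (map_prodMk_eq_compProd_prod_condDistrib_self hM hX hXhat hindep hdist)
      (by fun_prop) ((hX2.sub hXhat2).integrable_norm_pow two_ne_zero)
  have hcondExp : P[X | MeasurableSpace.comap M inferInstance] =ᵐ[P] fun ω => ∫ x, x ∂κ (M ω) :=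
    condExp_ae_eq_integral_condDistrib' hM (hX2.integrable one_le_two)
  have hmean : Measurable fun b => ∫ x, x ∂κ b :=
    measurable_snd.stronglyMeasurable.integral_condDistrib.measurable
  have hmmse : ∫ ω, ‖X ω - (P[X | MeasurableSpace.comap M inferInstance]) ω‖ ^ 2 ∂P
      = ∫ b, ∫ x, ‖x - ∫ y, y ∂κ b‖ ^ 2 ∂κ b ∂P.map M := by
    rw [integral_congr_ae (hcondExp.mono fun ω h => congrArg (fun y => ‖X ω - y‖ ^ 2) h)]
    exact integral_eq_integral_integral_of_map_eq_compProd
      (f := fun q => ‖q.2 - ∫ y, y ∂κ q.1‖ ^ 2) hM hX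
      (compProd_map_condDistrib hX.aemeasurable).symm
      ((measurable_snd.sub (hmean.comp measurable_fst)).norm.pow_const 2).stronglyMeasurable
      ((hX2.sub ((hX2.condExp one_le_two).ae_eq hcondExp)).integrable_norm_pow two_ne_zero)
  rw [hmse, hmmse, ← integral_const_mul]
  refine integral_congr_ae ((ae_memLp_condDistrib two_ne_zero ENNReal.ofNat_ne_top hM hX hX2).mono
    fun b hb => ?_)
  simpa only [Kernel.prod_apply] using integral_prod_self_norm_sub_sq hb
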